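/- Let f : EuclideanSpace ℝ (Fin n) → ℝ be continuously differentiable and σ-strongly convex with σ > 0, let A be an m × n real matrix and a ∈ EuclideanSpace ℝ (Fin m), and assume the Slater condition: there exists x̄ with (A.mulVec x̄) i < a i for every i. Suppose μ* ≥ 0 (componentwise) maximizes the dual function Ψ(μ) = inf over x of (f(x) + ⟨μ, A.mulVec x − a⟩) over the nonnegative orthant. Then the unique minimizer x*(μ*) of x ↦ f(x) + ⟨μ*, A.mulVec x − a⟩ is the unique global minimizer of f over the feasible set {x : (A.mulVec x) i ≤ a i for all i}. -/

import Mathlib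

/-- Reinterpret a plain vector `Fin m → ℝ` as an element of `EuclideanSpace ℝ (Fin m)`. -/
def toEuc (m : ℕ) (v : Fin m → ℝ) : EuclideanSpace ℝ (Fin m) := WithLp.toLp 2 v

/-!
Strong convexity of the Lagrangian at `μ*` gives quadratic growth around its minimizer `x*`:
`L(x, μ*) ≥ L(x*, μ*) + σ/2 ‖x - x*‖²`. Writing `gⱼ(x) = (A x - a)ⱼ = ⟪Aⱼ, x⟫ - aⱼ`, the
growth bound and Young's inequality give
`Ψ(μ* + t eⱼ) ≥ L(x*, μ*) + t gⱼ(x*) - t² ‖Aⱼ‖² / (2σ)`, while `Ψ(μ*) ≤ L(x*, μ*)`.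
Dual optimality for every `t ≥ -μ*ⱼ` therefore forces `t gⱼ(x*) ≤ t² ‖Aⱼ‖² / (2σ)`, hence
feasibility `gⱼ(x*) ≤ 0` and complementary slackness `μ*ⱼ gⱼ(x*) = 0`. Then `L(x*, μ*) = f x*`,
and every feasible `x` satisfies `f x ≥ L(x, μ*) ≥ f x* + σ/2 ‖x - x*‖²`.
-/

open Set Filter Topology
open scoped RealInnerProductSpace

lemma nonpos_of_forall_Ioo_le_mul {c K δ : ℝ} (hδ : 0 < δ) (h : ∀ t ∈ Ioo 0 δ, c ≤ t * K) :
    c ≤ 0 :=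
  have hlim : Tendsto (fun t => t * K) (𝓝[>] 0) (𝓝 0) :=
    tendsto_nhdsWithin_of_tendsto_nhds ((continuous_mul_const K).tendsto' 0 0 (zero_mul K))
  ge_of_tendsto hlim (eventually_of_mem (Ioo_mem_nhdsGT hδ) h)

lemma nonpos_and_mul_eq_zero_of_forall_mul_le_sq {μ c K : ℝ} (hμ : 0 ≤ μ)
    (h : ∀ t, -μ ≤ t → t * c ≤ t ^ 2 * K) : c ≤ 0 ∧ μ * c = 0 := by
  have hc : c ≤ 0 := nonpos_of_forall_Ioo_le_mul (K := K) one_pos fun t ⟨ht, _⟩ =>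
    le_of_mul_le_mul_left (by linear_combination h t (by linarith)) ht
  refine ⟨hc, ?_⟩
  rcases hμ.eq_or_lt with rfl | hμpos
  · exact zero_mul c
  · have : -c ≤ 0 := nonpos_of_forall_Ioo_le_mul (K := K) hμpos fun t ⟨ht, htμ⟩ =>
      le_of_mul_le_mul_left (by linear_combination h (-t) (by linarith)) ht
    rw [le_antisymm hc (by linarith), mul_zero]

lemma StrongConvexOn.add_sq_norm_sub_le_of_isMinOn {E : Type*} [NormedAddCommGroup E]
    [NormedSpace ℝ E] {s : Set E} {σ : ℝ} {f : E → ℝ} {x₀ x : E} (hf : StrongConvexOn s σ f)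
    (hmin : IsMinOn f s x₀) (hx₀ : x₀ ∈ s) (hx : x ∈ s) :
    f x₀ + σ / 2 * ‖x - x₀‖ ^ 2 ≤ f x := by
  suffices σ / 2 * ‖x - x₀‖ ^ 2 - (f x - f x₀) ≤ 0 by linarith
  refine nonpos_of_forall_Ioo_le_mul (K := σ / 2 * ‖x - x₀‖ ^ 2) one_pos fun t ⟨ht0, ht1⟩ => ?_
  have hconv := hf.2 hx hx₀ ht0.le (sub_nonneg.2 ht1.le) (add_sub_cancel t 1)
  have hle := isMinOn_iff.1 hmin _ (hf.1 hx hx₀ ht0.le (sub_nonneg.2 ht1.le) (add_sub_cancel t 1))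
  rw [smul_eq_mul, smul_eq_mul] at hconv
  have : t * ((1 - t) * (σ / 2 * ‖x - x₀‖ ^ 2)) ≤ t * (f x - f x₀) := by linarith
  linarith [le_of_mul_le_mul_left this ht0]

lemma neg_sq_mul_sq_norm_div_le_add_inner {F : Type*} [NormedAddCommGroup F]
    [InnerProductSpace ℝ F] {σ : ℝ} (hσ : 0 < σ) (t : ℝ) (r y : F) :
    -(t ^ 2 * ‖r‖ ^ 2 / (2 * σ)) ≤ σ / 2 * ‖y‖ ^ 2 + t * ⟪r, y⟫ := by
  have hexp : ‖σ • y + t • r‖ ^ 2 / (2 * σ)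
      = σ / 2 * ‖y‖ ^ 2 + t * ⟪r, y⟫ + t ^ 2 * ‖r‖ ^ 2 / (2 * σ) := by
    rw [norm_add_sq_real, norm_smul, norm_smul, real_inner_smul_left, real_inner_smul_right,
      real_inner_comm, Real.norm_eq_abs, Real.norm_eq_abs, mul_pow, mul_pow, sq_abs, sq_abs]
    field_simp
  linarith [div_nonneg (sq_nonneg ‖σ • y + t • r‖) (by linarith : (0 : ℝ) ≤ 2 * σ)]

section Lagrangian

variable {n m : ℕ}

noncomputable def lagrangian (f : EuclideanSpace ℝ (Fin n) → ℝ) (A : Matrix (Fin m) (Fin n) ℝ)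
    (a : EuclideanSpace ℝ (Fin m)) (x : EuclideanSpace ℝ (Fin n))
    (μ : EuclideanSpace ℝ (Fin m)) : ℝ :=
  f x + ⟪μ, toEuc m (A.mulVec x) - a⟫

noncomputable def dual (f : EuclideanSpace ℝ (Fin n) → ℝ) (A : Matrix (Fin m) (Fin n) ℝ)
    (a : EuclideanSpace ℝ (Fin m)) (μ : EuclideanSpace ℝ (Fin m)) : ℝ :=
  ⨅ x, lagrangian f A a x μ

lemma mulVec_apply_eq_inner_toEuc (A : Matrix (Fin m) (Fin n) ℝ) (x : EuclideanSpace ℝ (Fin n))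
    (j : Fin m) : A.mulVec x j = ⟪toEuc n (A j), x⟫ := by
  simp [Matrix.mulVec, dotProduct, PiLp.inner_apply, toEuc, mul_comm]

lemma inner_toEuc_sub (μ a : EuclideanSpace ℝ (Fin m)) (w : Fin m → ℝ) :
    ⟪μ, toEuc m w - a⟫ = ∑ j, μ j * (w j - a j) := by
  simp [PiLp.inner_apply, toEuc, mul_comm]

lemma strongConvexOn_lagrangian {σ : ℝ} {f : EuclideanSpace ℝ (Fin n) → ℝ}
    (hf : StrongConvexOn univ σ f)
    (A : Matrix (Fin m) (Fin n) ℝ) (a μ : EuclideanSpace ℝ (Fin m)) :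
    StrongConvexOn univ σ (lagrangian f A a · μ) := by
  have hlin : ConvexOn ℝ univ
      fun x : EuclideanSpace ℝ (Fin n) => ⟪μ, toEuc m (A.mulVec x) - a⟫ := by
    simp_rw [inner_sub_right]
    exact (((innerₛₗ ℝ μ).comp (Matrix.toEuclideanLin A)).convexOn convex_univ).add_const _
  have := hf.add (uniformConvexOn_zero.2 hlin)
  rwa [add_zero] at this

variable {f : EuclideanSpace ℝ (Fin n) → ℝ} {A : Matrix (Fin m) (Fin n) ℝ}
  {a μ : EuclideanSpace ℝ (Fin m)} {x : EuclideanSpace ℝ (Fin n)}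

lemma lagrangian_add_single (j : Fin m) (t : ℝ) :
    lagrangian f A a x (μ + EuclideanSpace.single j t)
      = lagrangian f A a x μ + t * (⟪toEuc n (A j), x⟫ - a j) := by
  rw [lagrangian, lagrangian, inner_add_left, EuclideanSpace.inner_single_left,
    ← mulVec_apply_eq_inner_toEuc]
  simp only [toEuc, conj_trivial, PiLp.sub_apply]
  ring

lemma lagrangian_le_of_feasible (hμ : ∀ j, 0 ≤ μ j) (hx : ∀ j, A.mulVec x j ≤ a j) :
    lagrangian f A a x μ ≤ f x := by
  rw [lagrangian, inner_toEuc_sub, add_le_iff_nonpos_right]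
  exact Finset.sum_nonpos fun j _ => mul_nonpos_of_nonneg_of_nonpos (hμ j) (sub_nonpos.2 (hx j))

lemma lagrangian_eq_of_mul_eq_zero (hslack : ∀ j, μ j * (A.mulVec x j - a j) = 0) :
    lagrangian f A a x μ = f x := by
  rw [lagrangian, inner_toEuc_sub, Finset.sum_eq_zero fun j _ => hslack j, add_zero]

lemma mulVec_le_and_mul_eq_zero_of_isMaxOn_dual {σ : ℝ} (hσ : 0 < σ)
    (hgrowth : ∀ x', lagrangian f A a x μ + σ / 2 * ‖x' - x‖ ^ 2 ≤ lagrangian f A a x' μ)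
    (hμ : ∀ i, 0 ≤ μ i) (hmax : IsMaxOn (dual f A a) {μ' | ∀ i, 0 ≤ μ' i} μ) (j : Fin m) :
    A.mulVec x j ≤ a j ∧ μ j * (A.mulVec x j - a j) = 0 := by
  have hdual : dual f A a μ ≤ lagrangian f A a x μ :=
    ciInf_le ⟨_, forall_mem_range.2 fun x' =>
      (le_add_of_nonneg_right (by positivity)).trans (hgrowth x')⟩ x
  rw [← sub_nonpos, mulVec_apply_eq_inner_toEuc]
  set r := toEuc n (A j)
  refine nonpos_and_mul_eq_zero_of_forall_mul_le_sq (K := ‖r‖ ^ 2 / (2 * σ)) (hμ j)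
    fun t ht => ?_
  have hperturb : lagrangian f A a x μ + t * (⟪r, x⟫ - a j) - t ^ 2 * ‖r‖ ^ 2 / (2 * σ)
      ≤ dual f A a (μ + EuclideanSpace.single j t) := by
    refine le_ciInf fun x' => ?_
    have hyoung := neg_sq_mul_sq_norm_div_le_add_inner hσ t r (x' - x)
    rw [inner_sub_right] at hyoung
    rw [lagrangian_add_single]
    linarith [hgrowth x']
  have hadmissible : ∀ i, 0 ≤ (μ + EuclideanSpace.single j t) i := by
    intro i
    rw [PiLp.add_apply, PiLp.single_apply]
    split_ifs with hij
    · subst hij; linarith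
    · simpa using hμ i
  linear_combination hperturb + isMaxOn_iff.1 hmax _ hadmissible + hdual

end Lagrangian

theorem stmt_12_general (n m : ℕ) (σ : ℝ) (hσ : 0 < σ)
    (f : EuclideanSpace ℝ (Fin n) → ℝ)
    (hsc : ConvexOn ℝ Set.univ (fun x => f x - σ / 2 * ‖x‖ ^ 2))
    (A : Matrix (Fin m) (Fin n) ℝ) (a : EuclideanSpace ℝ (Fin m))
    (Lag : EuclideanSpace ℝ (Fin n) → EuclideanSpace ℝ (Fin m) → ℝ)
    (hLag : ∀ x μ, Lag x μ = f x + @inner ℝ _ _ μ (toEuc m (A.mulVec x) - a))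
    (Ψ : EuclideanSpace ℝ (Fin m) → ℝ)
    (hΨ : ∀ μ, Ψ μ = ⨅ x : EuclideanSpace ℝ (Fin n), Lag x μ)
    (μstar : EuclideanSpace ℝ (Fin m)) (hμstar0 : ∀ i, 0 ≤ μstar i)
    (hμstarmax : ∀ μ : EuclideanSpace ℝ (Fin m), (∀ i, 0 ≤ μ i) → Ψ μ ≤ Ψ μstar)
    (xstar : EuclideanSpace ℝ (Fin n))
    (hxstarmin : ∀ x, Lag xstar μstar ≤ Lag x μstar) :
    (∀ i, A.mulVec xstar i ≤ a i) ∧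
    (∀ x : EuclideanSpace ℝ (Fin n), (∀ i, A.mulVec x i ≤ a i) → f xstar ≤ f x) ∧
    (∀ x' : EuclideanSpace ℝ (Fin n), (∀ i, A.mulVec x' i ≤ a i) →
      (∀ x : EuclideanSpace ℝ (Fin n), (∀ i, A.mulVec x i ≤ a i) → f x' ≤ f x) →
      x' = xstar) := by
  obtain rfl : Lag = lagrangian f A a := funext₂ hLag
  obtain rfl : Ψ = dual f A a := funext hΨ
  have hgrowth (x : EuclideanSpace ℝ (Fin n)) :
      lagrangian f A a xstar μstar + σ / 2 * ‖x - xstar‖ ^ 2 ≤ lagrangian f A a x μstar :=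
    (strongConvexOn_lagrangian (strongConvexOn_iff_convex.2 hsc) A a μstar
      ).add_sq_norm_sub_le_of_isMinOn (isMinOn_univ_iff.2 hxstarmin) (mem_univ _) (mem_univ x)
  have hkkt := mulVec_le_and_mul_eq_zero_of_isMaxOn_dual hσ hgrowth hμstar0
    (isMaxOn_iff.2 hμstarmax)
  have hopt (x : EuclideanSpace ℝ (Fin n)) (hx : ∀ i, A.mulVec x i ≤ a i) :
      f xstar + σ / 2 * ‖x - xstar‖ ^ 2 ≤ f x := by
    rw [← lagrangian_eq_of_mul_eq_zero (f := f) fun j => (hkkt j).2]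
    exact (hgrowth x).trans (lagrangian_le_of_feasible hμstar0 hx)
  have hfeas i := (hkkt i).1
  refine ⟨hfeas, fun x hx => (le_add_of_nonneg_right (by positivity)).trans (hopt x hx),
    fun x' hx' hx'min => ?_⟩
  have : σ / 2 * ‖x' - xstar‖ ^ 2 ≤ 0 := by linarith [hopt x' hx', hx'min xstar hfeas]
  have : ‖x' - xstar‖ ^ 2 = 0 := by nlinarith [sq_nonneg ‖x' - xstar‖]
  simpa [sub_eq_zero] using this

/-- Primal recovery (equation (28) of the paper): under the Slater condition, if `μ* ≥ 0`
maximizes the dual function `Ψ(μ) = inf_x (f x + ⟨μ, A x - a⟩)` over the nonnegative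
orthant, then the unique minimizer `x*(μ*)` of the Lagrangian at `μ*` is the unique global
minimizer of the strongly convex cost `f` over the feasible set `{x : A x ≤ a}`. -/
theorem stmt_12 (n m : ℕ) (σ : ℝ) (hσ : 0 < σ)
    (f : EuclideanSpace ℝ (Fin n) → ℝ) (hf : ContDiff ℝ 1 f)
    (hsc : ConvexOn ℝ Set.univ (fun x => f x - σ / 2 * ‖x‖ ^ 2))
    (A : Matrix (Fin m) (Fin n) ℝ) (a : EuclideanSpace ℝ (Fin m))
    (hslater : ∃ xbar : EuclideanSpace ℝ (Fin n), ∀ i, A.mulVec xbar i < a i)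
    (Lag : EuclideanSpace ℝ (Fin n) → EuclideanSpace ℝ (Fin m) → ℝ)
    (hLag : ∀ x μ, Lag x μ = f x + @inner ℝ _ _ μ (toEuc m (A.mulVec x) - a))
    (Ψ : EuclideanSpace ℝ (Fin m) → ℝ)
    (hΨ : ∀ μ, Ψ μ = ⨅ x : EuclideanSpace ℝ (Fin n), Lag x μ)
    (μstar : EuclideanSpace ℝ (Fin m)) (hμstar0 : ∀ i, 0 ≤ μstar i)
    (hμstarmax : ∀ μ : EuclideanSpace ℝ (Fin m), (∀ i, 0 ≤ μ i) → Ψ μ ≤ Ψ μstar)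
    (xstar : EuclideanSpace ℝ (Fin n))
    (hxstarmin : ∀ x, Lag xstar μstar ≤ Lag x μstar)
    (hxstaruniq : ∀ x', (∀ x, Lag x' μstar ≤ Lag x μstar) → x' = xstar) :
    (∀ i, A.mulVec xstar i ≤ a i) ∧
    (∀ x : EuclideanSpace ℝ (Fin n), (∀ i, A.mulVec x i ≤ a i) → f xstar ≤ f x) ∧
    (∀ x' : EuclideanSpace ℝ (Fin n), (∀ i, A.mulVec x' i ≤ a i) →
      (∀ x : EuclideanSpace ℝ (Fin n), (∀ i, A.mulVec x i ≤ a i) → f x' ≤ f x) →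
      x' = xstar) :=
  stmt_12_general n m σ hσ f hsc A a Lag hLag Ψ hΨ μstar hμstar0 hμstarmax xstar hxstarmin
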